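/- Normalization of the general optimal weights: for every integer r ≥ 1, (i) for every l with 1 ≤ l ≤ r, Σ_{k=0}^{l-1} C^{r+l-1}_{l-1,k} = 1, and (ii) for every l with 1 ≤ l ≤ r−1, Σ_{k=1}^{l} C^{r+l-1}_{l,k} = 1. -/

import Mathlib

open Finset PowerSeries
open scoped Nat

/-! Writing `r = s + m + 1` and `l = m + 1`, the weight `C1 r l k` is `C(s+m-k, s) C(2r, 2k+1)`
up to a factor depending only on `r` and `l`. The sum of these numerators over `k` is the
coefficient of `X^(2m+1)` in `(1+X)^(2r) / (1-X²)^(s+1) = (1+X)^(s+2m+1) / (1-X)^(s+1)`, which is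
`2^(2m+1) C(s+2m+1, 2m+1)`. With `r = s + m + 2` and `l = m + 1`, the weight `C2 r l k` carries
an extra factor `k`, and `k C(s+l-k, s) = l C(s+l-k, s) - (s+1) C(s+l-k, s+1)` reduces the sum
to two instances of the same identity. -/

/-- The general optimal weights `C^{r+l-1}_{l-1,k}`, for `1 ≤ l ≤ r` and `0 ≤ k ≤ l-1`. -/
noncomputable def C1 (r l k : ℕ) : ℝ :=
  (1 / 2 ^ (2 * l)) * (((r : ℝ) + (l : ℝ)) / (l : ℝ)) *
    (((l : ℝ) - (k : ℝ)) / ((r : ℝ) - (k : ℝ))) *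
    (Nat.choose l k : ℝ) * ((Nat.choose r k : ℝ))⁻¹ * (Nat.choose (2 * l) l : ℝ) *
    ((Nat.choose (l + r) r : ℝ))⁻¹ * (Nat.choose (2 * r) (2 * k + 1) : ℝ)

/-- The general optimal weights `C^{r+l-1}_{l,k}`, for `1 ≤ l ≤ r-1` and `1 ≤ k ≤ l`. -/
noncomputable def C2 (r l k : ℕ) : ℝ :=
  (1 / 2 ^ (2 * l)) * ((2 * (l : ℝ) + 1) / (2 * (r : ℝ) - 1)) *
    (((r : ℝ) + (l : ℝ)) / (l : ℝ)) * ((k : ℝ) / ((r : ℝ) - (k : ℝ))) *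
    (Nat.choose l k : ℝ) * ((Nat.choose r k : ℝ))⁻¹ * (Nat.choose (2 * l) l : ℝ) *
    ((Nat.choose (l + r) r : ℝ))⁻¹ * (Nat.choose (2 * r) (2 * k + 1) : ℝ)

theorem Finset.sum_range_two_mul_add_two {M : Type*} [AddCommMonoid M] (f : ℕ → M) (m : ℕ) :
    ∑ i ∈ range (2 * m + 2), f i = ∑ k ∈ range (m + 1), (f (2 * k) + f (2 * k + 1)) := by
  induction m with
  | zero => simp [sum_range_succ]
  | succ m ih =>
    rw [sum_range_succ _ (m + 1), ← ih, show 2 * (m + 1) + 2 = 2 * m + 2 + 1 + 1 by ring,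
      sum_range_succ, sum_range_succ, add_assoc]
    rfl

theorem Finset.sum_range_succ_eq_add_sum_Icc {M : Type*} [AddCommMonoid M] (f : ℕ → M)
    (n : ℕ) : ∑ k ∈ range (n + 1), f k = f 0 + ∑ k ∈ Icc 1 n, f k := by
  rw [Nat.range_succ_eq_Icc_zero, ← insert_Icc_add_one_left_eq_Icc (Nat.zero_le n),
    sum_insert (by simp), zero_add]

theorem Nat.sum_range_choose_mul_choose_add_sub (s n : ℕ) :
    ∑ i ∈ range (n + 1), (s + n).choose i * (s + (n - i)).choose s =
      2 ^ n * (s + n).choose n := by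
  rw [← Nat.sum_range_choose, sum_mul, ← Nat.choose_symm_add]
  refine sum_congr rfl fun i hi => ?_
  have hi : i ≤ n := Nat.lt_succ_iff.mp (mem_range.mp hi)
  rw [Nat.choose_symm_of_eq_add (show s + n = i + (s + (n - i)) by omega),
    Nat.choose_mul (by omega), show s + (n - i) - s = n - i by omega,
    show s + n - s = n by omega, Nat.choose_symm hi, mul_comm]

namespace PowerSeries

variable {R : Type*} [CommRing R]

theorem coeff_one_add_X_pow (N n : ℕ) : coeff n ((1 + X : R⟦X⟧) ^ N) = N.choose n := by
  have : (1 + X : R⟦X⟧) ^ N = ((1 + Polynomial.X) ^ N : Polynomial R) := by simp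
  rw [this, Polynomial.coeff_coe, Polynomial.coeff_one_add_X_pow]

theorem expand_two_invOneSubPow_mul_one_add_X_pow (d : ℕ) :
    expand 2 two_ne_zero (invOneSubPow R d).val * (1 + X) ^ d = (invOneSubPow R d).val := by
  set u := invOneSubPow R d
  calc expand 2 two_ne_zero u.val * (1 + X) ^ d
      = expand 2 two_ne_zero u.val * (1 + X) ^ d * (u.inv * u.val) := by rw [u.inv_val, mul_one]
    _ = expand 2 two_ne_zero (u.val * u.inv) * u.val := by
        rw [map_mul, invOneSubPow_inv_eq_one_sub_pow, map_pow, map_sub, map_one, expand_X,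
          show (1 - X ^ 2 : R⟦X⟧) = (1 - X) * (1 + X) by ring, mul_pow]
        ring
    _ = u.val := by rw [u.val_inv, map_one, one_mul]

end PowerSeries

theorem Nat.sum_choose_mul_choose_two_mul_add_one (s m : ℕ) :
    ∑ k ∈ range (m + 1), (s + m - k).choose s * (2 * (s + m + 1)).choose (2 * k + 1) =
      2 ^ (2 * m + 1) * (s + 2 * m + 1).choose (2 * m + 1) := by
  set G : ℤ⟦X⟧ := (invOneSubPow ℤ (s + 1)).val
  set E := expand 2 two_ne_zero G
  have hG : ∀ n, coeff n G = (s + n).choose s := fun n => by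
    simp [G, invOneSubPow_val_succ_eq_mk_add_choose]
  have hprod : (1 + X) ^ (2 * (s + m + 1)) * E = (1 + X) ^ (s + 2 * m + 1) * G := by
    rw [show 2 * (s + m + 1) = (s + 2 * m + 1) + (s + 1) by ring, pow_add, mul_assoc,
      mul_comm ((1 + X) ^ (s + 1)), expand_two_invOneSubPow_mul_one_add_X_pow]
  have hodd : ∀ k ∈ range (m + 1),
      coeff (2 * k) ((1 + X) ^ (2 * (s + m + 1))) * coeff (2 * m + 1 - 2 * k) E +
          coeff (2 * k + 1) ((1 + X) ^ (2 * (s + m + 1))) * coeff (2 * m + 1 - (2 * k + 1)) E =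
        ((s + m - k).choose s * (2 * (s + m + 1)).choose (2 * k + 1) : ℕ) := fun k hk => by
    have hk : k ≤ m := Nat.lt_succ_iff.mp (mem_range.mp hk)
    rw [coeff_expand_of_not_dvd _ _ _ (by omega),
      show 2 * m + 1 - (2 * k + 1) = 2 * (m - k) by omega, coeff_expand_mul,
      coeff_one_add_X_pow _ (2 * k + 1), hG, ← Nat.add_sub_assoc hk]
    push_cast
    ring
  have hcoeff := congrArg (coeff (2 * m + 1)) hprod
  rw [coeff_mul, coeff_mul, Nat.sum_antidiagonal_eq_sum_range_succ_mk,
    Nat.sum_antidiagonal_eq_sum_range_succ_mk, sum_range_two_mul_add_two,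
    sum_congr rfl hodd] at hcoeff
  simp only [coeff_one_add_X_pow, hG] at hcoeff
  have hrhs := Nat.sum_range_choose_mul_choose_add_sub s (2 * m + 1)
  rw [← add_assoc] at hrhs
  rw [← hrhs]
  exact_mod_cast hcoeff

theorem Nat.mul_choose_add_succ_mul_choose_succ {s M k : ℕ} (hk : k ≤ M) :
    k * (s + M - k).choose s + (s + 1) * (s + M - k).choose (s + 1) =
      M * (s + M - k).choose s := by
  obtain ⟨d, rfl⟩ := Nat.exists_eq_add_of_le hk
  have h := Nat.choose_succ_right_eq (s + (k + d) - k) s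
  rw [show s + (k + d) - k - s = d by omega] at h
  linear_combination h

theorem Nat.sum_mul_choose_mul_choose_two_mul_add_one (s m : ℕ) :
    (2 * m + 3) * ∑ k ∈ Icc 1 (m + 1),
        k * (s + m + 1 - k).choose s * (2 * (s + m + 2)).choose (2 * k + 1) =
      (2 * s + 2 * m + 3) * 2 ^ (2 * m + 2) * (m + 1) * (s + 2 * m + 2).choose (2 * m + 2) := by
  set Z := fun k => (2 * (s + m + 2)).choose (2 * k + 1)
  have hsplit : ∀ k ∈ range (m + 2),
      k * (s + m + 1 - k).choose s * Z k + (s + 1) * ((s + m + 1 - k).choose (s + 1) * Z k) =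
        (m + 1) * ((s + m + 1 - k).choose s * Z k) := fun k hk => by
    have h : k * (s + m + 1 - k).choose s + (s + 1) * (s + m + 1 - k).choose (s + 1) =
        (m + 1) * (s + m + 1 - k).choose s :=
      Nat.mul_choose_add_succ_mul_choose_succ (Nat.lt_succ_iff.mp (mem_range.mp hk))
    linear_combination Z k * h
  have hX : ∑ k ∈ range (m + 2), (s + m + 1 - k).choose s * Z k =
      2 ^ (2 * m + 3) * (s + 2 * m + 3).choose (2 * m + 3) :=
    Nat.sum_choose_mul_choose_two_mul_add_one s (m + 1)
  have hY : ∑ k ∈ range (m + 2), (s + m + 1 - k).choose (s + 1) * Z k =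
      2 ^ (2 * m + 1) * (s + 2 * m + 2).choose (2 * m + 1) := by
    rw [sum_range_succ, show s + m + 1 - (m + 1) = s by omega,
      Nat.choose_eq_zero_of_lt (Nat.lt_succ_self s), zero_mul, add_zero]
    convert Nat.sum_choose_mul_choose_two_mul_add_one (s + 1) m using 3 with k
    · rw [show s + 1 + m = s + m + 1 by ring]
    · simp only [Z]; ring_nf
    · ring
  have hsum := sum_congr rfl hsplit
  rw [sum_add_distrib, ← mul_sum, ← mul_sum, hX, hY] at hsum
  have ha := Nat.add_one_mul_choose_eq (s + 2 * m + 2) (2 * m + 2)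
  have hb := Nat.choose_succ_right_eq (s + 2 * m + 2) (2 * m + 1)
  rw [show s + 2 * m + 2 - (2 * m + 1) = s + 1 by omega] at hb
  have hS := sum_range_succ_eq_add_sum_Icc (fun k => k * (s + m + 1 - k).choose s * Z k) (m + 1)
  rw [zero_mul, zero_mul, zero_add] at hS
  rw [← hS]
  zify at hsum ha hb ⊢
  linear_combination (2 * (m : ℤ) + 3) * hsum - ((m : ℤ) + 1) * 2 ^ (2 * m + 3) * ha
    + 2 ^ (2 * m + 1) * (2 * (m : ℤ) + 3) * hb

theorem Nat.cast_choose_of_add_eq (K : Type*) [DivisionRing K] [CharZero K] {a b n : ℕ}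
    (h : a + b = n) : (n.choose a : K) = n ! / (a ! * b !) := by
  subst h
  exact Nat.cast_add_choose K

theorem C1_eq_choose_mul_choose_div (s m k : ℕ) (hk : k ≤ m) :
    C1 (s + m + 1) (m + 1) k =
      (s + m - k).choose s * (2 * (s + m + 1)).choose (2 * k + 1) /
        (2 ^ (2 * m + 1) * (s + 2 * m + 1).choose (2 * m + 1)) := by
  obtain ⟨c, rfl⟩ := Nat.exists_eq_add_of_le hk
  have hl : ((k + c + 1 : ℕ) : ℝ) - k = c + 1 := by push_cast; ring
  have hr : ((s + (k + c) + 1 : ℕ) : ℝ) - k = s + c + 1 := by push_cast; ring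
  rw [C1, hl, hr, show s + (k + c) - k = s + c by omega,
    Nat.cast_choose_of_add_eq ℝ (show k + (c + 1) = k + c + 1 by ring),
    Nat.cast_choose_of_add_eq ℝ (show k + (s + c + 1) = s + (k + c) + 1 by ring),
    Nat.cast_choose_of_add_eq ℝ (show (k + c + 1) + (k + c + 1) = 2 * (k + c + 1) by ring),
    Nat.cast_choose_of_add_eq ℝ
      (show (s + (k + c) + 1) + (k + c + 1) = (k + c + 1) + (s + (k + c) + 1) by ring),
    Nat.cast_add_choose,
    Nat.cast_choose_of_add_eq ℝ (show (2 * (k + c) + 1) + s = s + 2 * (k + c) + 1 by ring)]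
  rw [show (k + c + 1) + (s + (k + c) + 1) = s + 2 * (k + c) + 1 + 1 by ring,
    show 2 * (k + c + 1) = 2 * (k + c) + 1 + 1 by ring]
  simp only [Nat.factorial_succ]
  push_cast
  field_simp
  ring

theorem C2_eq_mul_choose_mul_choose_div (s m k : ℕ) (hk₀ : 1 ≤ k) (hk : k ≤ m + 1) :
    C2 (s + m + 2) (m + 1) k =
      (2 * m + 3) * (k * (s + m + 1 - k).choose s * (2 * (s + m + 2)).choose (2 * k + 1)) /
        ((2 * s + 2 * m + 3) * 2 ^ (2 * m + 2) * (m + 1) * (s + 2 * m + 2).choose (2 * m + 2)) := by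
  obtain ⟨j, rfl⟩ := Nat.exists_eq_add_of_le' hk₀
  obtain ⟨c, rfl⟩ := Nat.exists_eq_add_of_le (Nat.le_of_succ_le_succ hk)
  have hr : ((s + (j + c) + 2 : ℕ) : ℝ) - (j + 1 : ℕ) = s + c + 1 := by push_cast; ring
  have hr' : 2 * ((s + (j + c) + 2 : ℕ) : ℝ) - 1 = 2 * s + 2 * (j + c) + 3 := by push_cast; ring
  rw [C2, hr, hr', show s + (j + c) + 1 - (j + 1) = s + c by omega,
    Nat.cast_choose_of_add_eq ℝ (show (j + 1) + c = j + c + 1 by ring),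
    Nat.cast_choose_of_add_eq ℝ (show (j + 1) + (s + c + 1) = s + (j + c) + 2 by ring),
    Nat.cast_choose_of_add_eq ℝ (show (j + c + 1) + (j + c + 1) = 2 * (j + c + 1) by ring),
    Nat.cast_choose_of_add_eq ℝ
      (show (s + (j + c) + 2) + (j + c + 1) = (j + c + 1) + (s + (j + c) + 2) by ring),
    Nat.cast_add_choose,
    Nat.cast_choose_of_add_eq ℝ (show (2 * (j + c) + 2) + s = s + 2 * (j + c) + 2 by ring)]
  rw [show (j + c + 1) + (s + (j + c) + 2) = s + 2 * (j + c) + 2 + 1 by ring,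
    show 2 * (j + c + 1) = 2 * (j + c) + 2 by ring]
  simp only [Nat.factorial_succ]
  push_cast
  field_simp
  ring

theorem optimal_weights_normalized_general (r : ℕ) :
    (∀ l : ℕ, 1 ≤ l → l ≤ r → (∑ k ∈ Finset.range l, C1 r l k) = 1) ∧
      (∀ l : ℕ, 1 ≤ l → l ≤ r - 1 → (∑ k ∈ Finset.Icc 1 l, C2 r l k) = 1) := by
  constructor
  · intro l hl hlr
    obtain ⟨m, rfl⟩ := Nat.exists_eq_add_of_le' hl
    obtain ⟨s, rfl⟩ : ∃ s, r = s + m + 1 := ⟨r - (m + 1), by omega⟩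
    have hD : (0 : ℝ) < (s + 2 * m + 1).choose (2 * m + 1) := mod_cast Nat.choose_pos (by omega)
    rw [sum_congr rfl fun k hk =>
        C1_eq_choose_mul_choose_div s m k (Nat.lt_succ_iff.mp (mem_range.mp hk)),
      ← sum_div, div_eq_one_iff_eq (by positivity)]
    exact_mod_cast Nat.sum_choose_mul_choose_two_mul_add_one s m
  · intro l hl hlr
    obtain ⟨m, rfl⟩ := Nat.exists_eq_add_of_le' hl
    obtain ⟨s, rfl⟩ : ∃ s, r = s + m + 2 := ⟨r - (m + 2), by omega⟩
    have hD : (0 : ℝ) < (s + 2 * m + 2).choose (2 * m + 2) := mod_cast Nat.choose_pos (by omega)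
    rw [sum_congr rfl fun k hk =>
        C2_eq_mul_choose_mul_choose_div s m k (mem_Icc.mp hk).1 (mem_Icc.mp hk).2,
      ← sum_div, ← mul_sum, div_eq_one_iff_eq (by positivity)]
    exact_mod_cast Nat.sum_mul_choose_mul_choose_two_mul_add_one s m

/-- Normalization of the general optimal weights:
(i) `Σ_{k=0}^{l-1} C^{r+l-1}_{l-1,k} = 1` for `1 ≤ l ≤ r`;
(ii) `Σ_{k=1}^{l} C^{r+l-1}_{l,k} = 1` for `1 ≤ l ≤ r-1`. -/
theorem optimal_weights_normalized (r : ℕ) (hr : 1 ≤ r) :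
    (∀ l : ℕ, 1 ≤ l → l ≤ r → (∑ k ∈ Finset.range l, C1 r l k) = 1) ∧
      (∀ l : ℕ, 1 ≤ l → l ≤ r - 1 → (∑ k ∈ Finset.Icc 1 l, C2 r l k) = 1) :=
  optimal_weights_normalized_general r
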